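/- arXiv:1706.01786 — 2 statements merged into one kernel-verified Lean document; each statement's English description precedes it below -/
import Mathlib

section
/- Let (u_l)_{l≥0} and b = (b_l)_{l≥0} be real sequences, and fix j ≥ 0, n ≥ 1. Define ψ^{(j)}_n(b) = f^{(j)}_n(b) / H^{(j)}_{n+1} and e^{(j)}_n = H^{(j)}_{n+1} H^{(j+1)}_{n−1} / (H^{(j)}_n H^{(j+1)}_n). If H^{(j)}_n, H^{(j+1)}_n, H^{(j)}_{n+1}, and H^{(j+1)}_{n−1} are all nonzero, then ψ^{(j)}_n(b) = (ψ^{(j+1)}_{n−1}(b) − ψ^{(j)}_{n−1}(b)) / e^{(j)}_n. -/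
/-!
Both sides agree because of the Desnanot–Jacobi identity, applied to the `(n+1) × (n+1)` matrix
of `f^{(j)}_n(b)` with its first and last rows and its last two columns deleted: the four
`n × n` minors are `f^{(j+1)}_{n-1}(b)`, `H^{(j)}_n`, `H^{(j+1)}_n`, `f^{(j)}_{n-1}(b)`, and the
central minor is `H^{(j+1)}_{n-1}`.

Desnanot–Jacobi is Jacobi's theorem for `2 × 2` minors of the adjugate. Multiplying `A` by the
identity matrix with two columns replaced by columns of `adj A` gives
`det A * (2 × 2 minor of adj A) = (det A)^2 * (complementary minor)`, and `det A` cancels for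
the generic matrix over `ℤ[X_{ik}]`.
-/

/-- `hankel u j n` = the Hankel determinant `H^{(j)}_n = det (u_{j+i+k})_{0 ≤ i,k ≤ n-1}`
(with `H^{(j)}_0 = 1`, the determinant of the empty matrix). -/
noncomputable def hankel (u : ℕ → ℝ) (j n : ℕ) : ℝ :=
  Matrix.det (Matrix.of fun i k : Fin n => u (j + i + k))

/-- `fdet u b j n` = the determinant `f^{(j)}_n(b)`: determinant of the
`(n+1)×(n+1)` matrix whose entry in row `i` and column `k` (`0 ≤ k ≤ n-1`)
is `u (j+i+k)` and whose last column has entries `b (j+i)`. -/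
noncomputable def fdet (u b : ℕ → ℝ) (j n : ℕ) : ℝ :=
  Matrix.det (Matrix.of fun i k : Fin (n + 1) =>
    if (k : ℕ) < n then u (j + i + k) else b (j + i))

/-- `psi u b j n = ψ^{(j)}_n(b) = f^{(j)}_n(b) / H^{(j)}_{n+1}`. -/
noncomputable def psi (u b : ℕ → ℝ) (j n : ℕ) : ℝ :=
  fdet u b j n / hankel u j (n + 1)

/-- `eqd u j n = e^{(j)}_n = H^{(j)}_{n+1} H^{(j+1)}_{n-1} / (H^{(j)}_n H^{(j+1)}_n)`
for `n ≥ 1`, and `e^{(j)}_0 = 0`. -/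
noncomputable def eqd (u : ℕ → ℝ) (j n : ℕ) : ℝ :=
  if n = 0 then 0 else
    hankel u j (n + 1) * hankel u (j + 1) (n - 1) / (hankel u j n * hankel u (j + 1) n)

namespace Matrix

variable {R : Type*} [CommRing R]

section TwoMinors

variable {n : Type*} [Fintype n] [DecidableEq n]

theorem det_one_updateCol_updateCol {c₁ c₂ : n} (h : c₁ ≠ c₂) (v w : n → R) :
    det (((1 : Matrix n n R).updateCol c₁ v).updateCol c₂ w) = v c₁ * w c₂ - v c₂ * w c₁ := by
  let E : Matrix (Fin 2) n R := of ![Pi.single c₁ 1, Pi.single c₂ 1]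
  let U : Matrix n (Fin 2) R := (of ![v, w] - E)ᵀ
  -- a rank-two perturbation of `1`, so Weinstein–Aronszajn reduces the determinant to a `2 × 2` one
  have hUE : ((1 : Matrix n n R).updateCol c₁ v).updateCol c₂ w = 1 + U * E := by
    ext i k
    rcases eq_or_ne k c₂ with rfl | h₂
    · simp [U, E, mul_apply, h, one_apply, Pi.single_apply]
    rcases eq_or_ne k c₁ with rfl | h₁
    · simp [U, E, mul_apply, h₂, one_apply, Pi.single_apply]
    · simp [U, E, mul_apply, h₁, h₂, Pi.single_apply]
  rw [hUE, det_one_add_mul_comm, det_fin_two]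
  simp [U, E, h, h.symm]
  ring

theorem det_mul_adjugate_minor_two (A : Matrix n n R) {c₁ c₂ : n} (h : c₁ ≠ c₂) (r₁ r₂ : n) :
    det A * (adjugate A c₁ r₁ * adjugate A c₂ r₂ - adjugate A c₂ r₁ * adjugate A c₁ r₂) =
      det A ^ 2 * det ((A.updateCol c₁ (Pi.single r₁ 1)).updateCol c₂ (Pi.single r₂ 1)) := by
  have hcol : ∀ r, A *ᵥ (adjugate A).col r = det A • Pi.single r 1 := by
    intro r
    rw [← mulVec_single_one, mulVec_mulVec, mul_adjugate, smul_mulVec, one_mulVec]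
  calc det A * (adjugate A c₁ r₁ * adjugate A c₂ r₂ - adjugate A c₂ r₁ * adjugate A c₁ r₂)
      = det (A * ((1 : Matrix n n R).updateCol c₁ ((adjugate A).col r₁)).updateCol c₂
          ((adjugate A).col r₂)) := by
        rw [det_mul, det_one_updateCol_updateCol h]
        rfl
    _ = det ((A.updateCol c₁ (det A • Pi.single r₁ 1)).updateCol c₂
          (det A • Pi.single r₂ 1)) := by
        rw [mul_updateCol, mul_updateCol, mul_one, hcol, hcol]
    _ = _ := by
        rw [det_updateCol_smul, updateCol_comm _ h, det_updateCol_smul, updateCol_comm _ h.symm]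
        ring

theorem adjugate_minor_two_eq_det_mul (A : Matrix n n R) {c₁ c₂ : n} (h : c₁ ≠ c₂)
    (r₁ r₂ : n) :
    adjugate A c₁ r₁ * adjugate A c₂ r₂ - adjugate A c₂ r₁ * adjugate A c₁ r₂ =
      det A * det ((A.updateCol c₁ (Pi.single r₁ 1)).updateCol c₂ (Pi.single r₂ 1)) := by
  let X := mvPolynomialX n n ℤ
  have hX : adjugate X c₁ r₁ * adjugate X c₂ r₂ - adjugate X c₂ r₁ * adjugate X c₁ r₂ =
      det X * det ((X.updateCol c₁ (Pi.single r₁ 1)).updateCol c₂ (Pi.single r₂ 1)) := by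
    apply mul_left_cancel₀ (det_mvPolynomialX_ne_zero n ℤ)
    rw [det_mul_adjugate_minor_two X h, ← mul_assoc, sq]
  let f := MvPolynomial.aeval (R := ℤ) fun p : n × n => A p.1 p.2
  have hmap : ∀ (M : Matrix n n (MvPolynomial (n × n) ℤ)) (c r : n),
      f.mapMatrix (M.updateCol c (Pi.single r 1)) =
        (f.mapMatrix M).updateCol c (Pi.single r 1) := by
    intro M c r
    ext i k
    simp [updateCol_apply, Pi.single_apply, apply_ite f]
  rw [← mvPolynomialX_mapMatrix_aeval ℤ A, ← AlgHom.map_adjugate, ← hmap, ← hmap,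
    ← AlgHom.map_det, ← AlgHom.map_det]
  simpa only [AlgHom.mapMatrix_apply, map_apply, map_sub, map_mul] using congrArg f hX

end TwoMinors

theorem det_updateCol_single_one {m : ℕ} (A : Matrix (Fin (m + 1)) (Fin (m + 1)) R)
    (r c : Fin (m + 1)) :
    det (A.updateCol c (Pi.single r 1)) =
      (-1) ^ (r + c : ℕ) * det (A.submatrix r.succAbove c.succAbove) := by
  rw [← cramer_apply, cramer_eq_adjugate_mulVec, mulVec_single_one, col_apply,
    adjugate_fin_succ_eq_det_submatrix]

theorem submatrix_updateCol_castSucc {α l o : Type*} {m : ℕ} (A : Matrix l (Fin (m + 1)) α)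
    (f : o → l) (c : Fin m) (v : l → α) :
    (A.updateCol c.castSucc v).submatrix f Fin.castSucc =
      (A.submatrix f Fin.castSucc).updateCol c (v ∘ f) := by
  ext i k
  rcases eq_or_ne k c with rfl | hk
  · simp
  · simp [hk]

theorem det_updateCol_single_updateCol_single_last {m : ℕ}
    (A : Matrix (Fin (m + 2)) (Fin (m + 2)) R) :
    det ((A.updateCol (Fin.last m).castSucc (Pi.single 0 1)).updateCol (Fin.last (m + 1))
        (Pi.single (Fin.last (m + 1)) 1)) =
      (-1) ^ m * det (A.submatrix (fun i : Fin m => i.succ.castSucc)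
        (fun k : Fin m => k.castSucc.castSucc)) := by
  have hsingle : (Pi.single 0 1 : Fin (m + 2) → R) ∘ Fin.castSucc = Pi.single 0 1 := by
    funext i
    simp [Pi.single_apply, Fin.castSucc_eq_zero_iff]
  rw [det_updateCol_single_one, Fin.succAbove_last, submatrix_updateCol_castSucc, hsingle,
    det_updateCol_single_one, Fin.succAbove_zero, Fin.succAbove_last, submatrix_submatrix]
  simp [← two_mul, pow_mul, Function.comp_def]

theorem desnanot_jacobi {m : ℕ} (A : Matrix (Fin (m + 2)) (Fin (m + 2)) R) :
    det (A.submatrix (Fin.succAbove 0) (Fin.last m).castSucc.succAbove) *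
        det (A.submatrix (Fin.last (m + 1)).succAbove (Fin.last (m + 1)).succAbove) -
      det (A.submatrix (Fin.succAbove 0) (Fin.last (m + 1)).succAbove) *
        det (A.submatrix (Fin.last (m + 1)).succAbove (Fin.last m).castSucc.succAbove) =
      det A * det (A.submatrix (fun i : Fin m => i.succ.castSucc)
        (fun k : Fin m => k.castSucc.castSucc)) := by
  have h := adjugate_minor_two_eq_det_mul A (Fin.castSucc_lt_last (Fin.last m)).ne 0
    (Fin.last (m + 1))
  rw [det_updateCol_single_updateCol_single_last] at h
  simp only [adjugate_fin_succ_eq_det_submatrix, Fin.val_zero, Fin.val_last, Fin.val_castSucc,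
    pow_add, pow_one, zero_add] at h
  rcases neg_one_pow_eq_or R m with hs | hs <;> rw [hs] at h
  · linear_combination h
  · linear_combination -h

end Matrix

open Matrix in
theorem fdet_mul_hankel_sub_hankel_mul_fdet (u b : ℕ → ℝ) (j m : ℕ) :
    fdet u b (j + 1) m * hankel u j (m + 1) - hankel u (j + 1) (m + 1) * fdet u b j m =
      fdet u b j (m + 1) * hankel u (j + 1) m := by
  unfold fdet hankel
  convert desnanot_jacobi (of fun i k : Fin (m + 2) =>
    if (k : ℕ) < m + 1 then u (j + i + k) else b (j + i)) using 4
  all_goals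
    ext i k
    simp only [of_apply, submatrix_apply, Fin.succAbove, Fin.lt_def]
    grind

theorem stmt_2_general (u b : ℕ → ℝ) (j n : ℕ) (hn : 1 ≤ n)
    (h1 : hankel u j n ≠ 0) (h2 : hankel u (j + 1) n ≠ 0)
    (h4 : hankel u (j + 1) (n - 1) ≠ 0) :
    psi u b j n = (psi u b (j + 1) (n - 1) - psi u b j (n - 1)) / eqd u j n := by
  obtain ⟨m, rfl⟩ : ∃ m, n = m + 1 := ⟨n - 1, by omega⟩
  rw [Nat.add_sub_cancel] at h4
  rw [psi, psi, psi, eqd, if_neg m.succ_ne_zero, Nat.add_sub_cancel,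
    div_sub_div _ _ h2 h1, fdet_mul_hankel_sub_hankel_mul_fdet, mul_comm (hankel u j (m + 1)),
    div_div_div_cancel_right₀ (mul_ne_zero h2 h1), mul_div_mul_right _ _ h4]

theorem stmt_2 (u b : ℕ → ℝ) (j n : ℕ) (hn : 1 ≤ n)
    (h1 : hankel u j n ≠ 0) (h2 : hankel u (j + 1) n ≠ 0)
    (h3 : hankel u j (n + 1) ≠ 0) (h4 : hankel u (j + 1) (n - 1) ≠ 0) :
    psi u b j n = (psi u b (j + 1) (n - 1) - psi u b j (n - 1)) / eqd u j n :=
  stmt_2_general u b j n hn h1 h2 h4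
end

section
/- Let (u_l)_{l≥0} be a real sequence, and fix j ≥ 0 and n ≥ 1. If the Hankel determinants H^{(j)}_n, H^{(j+1)}_n, H^{(j+1)}_{n−1}, and H^{(j+2)}_{n−1} are all nonzero, then the qd-algorithm recursion holds: e^{(j)}_n = q^{(j+1)}_n − q^{(j)}_n + e^{(j+1)}_{n−1}, where e^{(j)}_0 = 0 by convention. -/
/-- `qqd u j n = q^{(j)}_n = H^{(j)}_{n-1} H^{(j+1)}_n / (H^{(j)}_n H^{(j+1)}_{n-1})`
(used for `n ≥ 1`). -/
noncomputable def qqd (u : ℕ → ℝ) (j n : ℕ) : ℝ :=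
  hankel u j (n - 1) * hankel u (j + 1) n / (hankel u j n * hankel u (j + 1) (n - 1))

namespace Matrix

variable {R m n : Type*} [CommRing R] [Fintype m] [Fintype n] [DecidableEq m] [DecidableEq n]

theorem mul_fromBlocks_adjugate (M : Matrix (m ⊕ n) (m ⊕ n) R) :
    M * fromBlocks M.adjugate.toBlocks₁₁ 0 M.adjugate.toBlocks₂₁ 1 =
      fromBlocks (M.det • 1) M.toBlocks₁₂ 0 M.toBlocks₂₂ := by
  ext i (k | k)
  · have := congrFun (congrFun M.mul_adjugate i) (Sum.inl k)
    rcases i with i | i <;>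
      simpa [mul_apply, Fintype.sum_sum_type, one_apply, toBlocks₁₁, toBlocks₂₁] using this
  · rcases i with i | i <;>
      simp [mul_apply, Fintype.sum_sum_type, one_apply, toBlocks₁₂, toBlocks₂₂]

theorem det_mul_det_toBlocks₁₁_adjugate (M : Matrix (m ⊕ n) (m ⊕ n) R) :
    M.det * M.adjugate.toBlocks₁₁.det = M.det ^ Fintype.card m * M.toBlocks₂₂.det := by
  simpa [det_fromBlocks_zero₁₂, det_fromBlocks_zero₂₁, det_smul] using
    congrArg det (mul_fromBlocks_adjugate M)

theorem det_toBlocks₁₁_adjugate [Nonempty m] (M : Matrix (m ⊕ n) (m ⊕ n) R) :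
    M.adjugate.toBlocks₁₁.det = M.det ^ (Fintype.card m - 1) * M.toBlocks₂₂.det := by
  set G := mvPolynomialX (m ⊕ n) (m ⊕ n) ℤ
  have hG : G.adjugate.toBlocks₁₁.det = G.det ^ (Fintype.card m - 1) * G.toBlocks₂₂.det := by
    refine mul_left_cancel₀ (det_mvPolynomialX_ne_zero (m ⊕ n) ℤ) ?_
    rw [det_mul_det_toBlocks₁₁_adjugate, ← mul_assoc, ← pow_succ',
      Nat.sub_add_cancel Fintype.card_pos]
  set f := MvPolynomial.eval₂Hom (Int.castRingHom R) fun p : (m ⊕ n) × (m ⊕ n) => M p.1 p.2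
  have hGM : f.mapMatrix G = M := mvPolynomialX_map_eval₂ _ M
  have hadj : f.mapMatrix G.adjugate.toBlocks₁₁ = M.adjugate.toBlocks₁₁ := by
    rw [← hGM, ← RingHom.map_adjugate]; rfl
  have h₂₂ : f.mapMatrix G.toBlocks₂₂ = M.toBlocks₂₂ := by rw [← hGM]; rfl
  simpa only [map_mul, map_pow, RingHom.map_det, hadj, h₂₂, hGM] using congrArg f hG

def finCornersEquiv (n : ℕ) : Fin 2 ⊕ Fin n ≃ Fin (n + 2) :=
  (Equiv.sumComm _ _).trans (finSumFinEquiv.trans (finRotate _))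

@[simp] lemma finCornersEquiv_inl_zero (n : ℕ) :
    finCornersEquiv n (.inl 0) = Fin.last (n + 1) := by
  simp [finCornersEquiv, Fin.ext_iff, Fin.val_add]

@[simp] lemma finCornersEquiv_inl_one (n : ℕ) : finCornersEquiv n (.inl 1) = 0 := by
  simp [finCornersEquiv, Fin.ext_iff, Fin.val_add]

@[simp] lemma finCornersEquiv_inr (n : ℕ) (i : Fin n) :
    finCornersEquiv n (.inr i) = i.castSucc.succ := by
  simp [finCornersEquiv, Fin.ext_iff, Fin.val_add]

theorem desnanot_jacobi_s4 {n : ℕ} (M : Matrix (Fin (n + 2)) (Fin (n + 2)) R) :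
    M.det * (M.submatrix (Fin.succ ∘ Fin.castSucc) (Fin.succ ∘ Fin.castSucc)).det =
      (M.submatrix Fin.succ Fin.succ).det * (M.submatrix Fin.castSucc Fin.castSucc).det -
        (M.submatrix Fin.castSucc Fin.succ).det * (M.submatrix Fin.succ Fin.castSucc).det := by
  have h := det_toBlocks₁₁_adjugate (M.submatrix (finCornersEquiv n) (finCornersEquiv n))
  have hinner : (M.submatrix (finCornersEquiv n) (finCornersEquiv n)).toBlocks₂₂ =
      M.submatrix (Fin.succ ∘ Fin.castSucc) (Fin.succ ∘ Fin.castSucc) := by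
    ext; simp [toBlocks₂₂]
  simp only [hinner, det_fin_two, toBlocks₁₁, of_apply, adjugate_submatrix_equiv_self,
    submatrix_apply, finCornersEquiv_inl_zero, finCornersEquiv_inl_one,
    adjugate_fin_succ_eq_det_submatrix, Fin.succAbove_zero, Fin.succAbove_last, Fin.val_last,
    Fin.val_zero, det_submatrix_equiv_self, Fintype.card_fin] at h
  have hsign : ((-1 : R) ^ (n + 1)) * (-1) ^ (n + 1) = 1 := by rw [← mul_pow]; norm_num
  linear_combination -h + ((M.submatrix Fin.succ Fin.succ).det *
    (M.submatrix Fin.castSucc Fin.castSucc).det - (M.submatrix Fin.castSucc Fin.succ).det *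
      (M.submatrix Fin.succ Fin.castSucc).det) * hsign

end Matrix

open Matrix

theorem hankel_desnanot_jacobi (u : ℕ → ℝ) (j n : ℕ) :
    hankel u j (n + 2) * hankel u (j + 2) n =
      hankel u (j + 2) (n + 1) * hankel u j (n + 1) -
        hankel u (j + 1) (n + 1) * hankel u (j + 1) (n + 1) := by
  convert desnanot_jacobi_s4 (of fun i k : Fin (n + 2) => u (j + i + k)) using 3
  all_goals unfold hankel; congr 1
  all_goals
    ext i k
    exact congrArg u (by simp only [Function.comp_apply, Fin.val_succ, Fin.val_castSucc]; omega)

theorem hankel_zero (u : ℕ → ℝ) (j : ℕ) : hankel u j 0 = 1 := det_fin_zero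

theorem eqd_succ (u : ℕ → ℝ) (j n : ℕ) :
    eqd u j (n + 1) = hankel u j (n + 2) * hankel u (j + 1) n /
      (hankel u j (n + 1) * hankel u (j + 1) (n + 1)) := if_neg n.succ_ne_zero

theorem qd_rhombus_rule_one (u : ℕ → ℝ) (j : ℕ)
    (h1 : hankel u j 1 ≠ 0) (h2 : hankel u (j + 1) 1 ≠ 0) :
    eqd u j 1 = qqd u (j + 1) 1 - qqd u j 1 + eqd u (j + 1) 0 := by
  have h := hankel_desnanot_jacobi u j 0
  rw [eqd_succ, eqd, if_pos rfl]
  simp only [qqd, Nat.sub_self, hankel_zero] at h ⊢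
  field_simp
  linear_combination h

theorem qd_rhombus_rule_add_two (u : ℕ → ℝ) (j n : ℕ)
    (h1 : hankel u j (n + 2) ≠ 0) (h2 : hankel u (j + 1) (n + 2) ≠ 0)
    (h3 : hankel u (j + 1) (n + 1) ≠ 0) (h4 : hankel u (j + 2) (n + 1) ≠ 0) :
    eqd u j (n + 2) = qqd u (j + 1) (n + 2) - qqd u j (n + 2) + eqd u (j + 1) (n + 1) := by
  have h := hankel_desnanot_jacobi u j (n + 1)
  have h' := hankel_desnanot_jacobi u j n
  rw [eqd_succ, eqd_succ]
  simp only [qqd, add_assoc, Nat.reduceAdd, Nat.reduceSubDiff] at h h' ⊢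
  field_simp
  linear_combination hankel u (j + 1) (n + 1) ^ 2 * h - hankel u (j + 1) (n + 2) ^ 2 * h'

theorem stmt_4_general (u : ℕ → ℝ) (j n : ℕ)
    (h1 : hankel u j n ≠ 0) (h2 : hankel u (j + 1) n ≠ 0)
    (h3 : hankel u (j + 1) (n - 1) ≠ 0) (h4 : hankel u (j + 2) (n - 1) ≠ 0) :
    eqd u j n = qqd u (j + 1) n - qqd u j n + eqd u (j + 1) (n - 1) := by
  rcases n with _ | _ | n
  · simp [eqd, qqd, hankel_zero]
  · exact qd_rhombus_rule_one u j h1 h2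
  · exact qd_rhombus_rule_add_two u j n h1 h2 h3 h4

theorem stmt_4 (u : ℕ → ℝ) (j n : ℕ) (hn : 1 ≤ n)
    (h1 : hankel u j n ≠ 0) (h2 : hankel u (j + 1) n ≠ 0)
    (h3 : hankel u (j + 1) (n - 1) ≠ 0) (h4 : hankel u (j + 2) (n - 1) ≠ 0) :
    eqd u j n = qqd u (j + 1) n - qqd u j n + eqd u (j + 1) (n - 1) :=
  stmt_4_general u j n h1 h2 h3 h4
end
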